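/- arXiv:2412.18598 — 2 statements merged into one kernel-verified Lean document; each statement's English description precedes it below -/
import Mathlib

section
/- For all natural numbers n, H ≥ 1 and any tuples τ_1, …, τ_H, τ_∞ ∈ ℕ^n, there exist finite nonempty subsets A_1, …, A_n of the integers ℤ such that: (a) for each 1 ≤ h ≤ H and all 1 ≤ j, k ≤ n, |hA_j| ≤ |hA_k| if and only if τ_h(j) ≤ τ_h(k); and (b) for every natural number h > H and all 1 ≤ j, k ≤ n, |hA_j| ≤ |hA_k| if and only if τ_∞(j) ≤ τ_∞(k). -/
/-!
Take `A_j = [0, w_j 0] + ∑_{t < H} {0, w_j (t + 1) - w_j t}` with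
`(t + 2) w_j t < w_j (t + 1) ≤ (t + 3) w_j t`. In `h A_j` the interval `[0, h w_j 0]` absorbs
the dilated pairs `h {0, w_j (t + 1) - w_j t}` as long as `t + 1 < h`, each one extending it to
`[0, h w_j (t + 1)]`; every later pair has a gap larger than the set built so far and multiplies
its size by `h + 1`. Hence `|h A_j| = (h w_j m + 1) (h + 1) ^ (H - m)` with `m = min H (h - 1)`,
and the sizes are ordered like the `w_j m`. Perturbing one fast-growing sequence by the rank of
`j` in `τ_m` makes them ordered like `τ_m`.
-/

open Pointwise

open Finset
open scoped Nat

lemma Icc_zero_add_pair {M s : ℤ} (hs : 0 ≤ s) (hsM : s ≤ M + 1) :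
    Icc 0 M + {0, s} = Icc 0 (M + s) := by
  ext x
  simp only [mem_add, mem_Icc, mem_insert, mem_singleton]
  constructor
  · rintro ⟨y, hy, z, rfl | rfl, rfl⟩ <;> omega
  · intro hx
    by_cases hxM : x ≤ M
    · exact ⟨x, ⟨hx.1, hxM⟩, 0, Or.inl rfl, add_zero x⟩
    · exact ⟨x - s, by omega, s, Or.inr rfl, sub_add_cancel x s⟩

lemma Icc_zero_add_nsmul_pair {M s : ℤ} (hs : 0 ≤ s) (hsM : s ≤ M + 1) (h : ℕ) :
    Icc 0 M + h • {0, s} = Icc 0 (M + h * s) := by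
  induction h with
  | zero => simp
  | succ h ih =>
    have : s ≤ M + h * s + 1 := by nlinarith
    rw [succ_nsmul, ← add_assoc, ih, Icc_zero_add_pair hs this, Nat.cast_succ, add_one_mul,
      add_assoc]

lemma Icc_zero_eq_nsmul (a : ℕ) : Icc (0 : ℤ) a = a • {0, 1} := by
  have := Icc_zero_add_nsmul_pair zero_le_one (le_add_of_nonneg_left le_rfl) a
  rwa [Icc_self, singleton_zero, zero_add, zero_add, mul_one, eq_comm] at this

lemma nsmul_Icc_zero (h a : ℕ) : h • Icc (0 : ℤ) a = Icc 0 ((h : ℤ) * a) := by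
  rw [Icc_zero_eq_nsmul, ← mul_nsmul', ← Icc_zero_eq_nsmul, Nat.cast_mul]

lemma nsmul_pair_eq_image (s : ℤ) (h : ℕ) :
    h • ({0, s} : Finset ℤ) = (range (h + 1)).image fun i : ℕ ↦ (i : ℤ) * s := by
  induction h with
  | zero => simp; rfl
  | succ h ih =>
    rw [succ_nsmul, ih]
    ext x
    simp only [mem_add, mem_image, mem_range, mem_insert, mem_singleton]
    constructor
    · rintro ⟨_, ⟨i, hi, rfl⟩, z, rfl | rfl, rfl⟩
      · exact ⟨i, by omega, by ring⟩
      · exact ⟨i + 1, by omega, by push_cast; ring⟩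
    · rintro ⟨i, hi, rfl⟩
      rcases Nat.lt_or_ge i (h + 1) with hih | hih
      · exact ⟨i * s, ⟨i, hih, rfl⟩, 0, Or.inl rfl, add_zero _⟩
      · exact ⟨(i - 1 : ℕ) * s, ⟨i - 1, by omega, rfl⟩, s, Or.inr rfl, by
          rw [Nat.cast_sub (by omega)]; push_cast; ring⟩

lemma nsmul_pair_subset_Icc {s : ℤ} (hs : 0 ≤ s) (h : ℕ) :
    h • ({0, s} : Finset ℤ) ⊆ Icc 0 (h * s) := by
  rw [nsmul_pair_eq_image]
  rintro _ hx
  obtain ⟨i, hi, rfl⟩ := mem_image.1 hx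
  have : (i : ℤ) ≤ h := by exact_mod_cast Nat.lt_succ_iff.1 (mem_range.1 hi)
  exact mem_Icc.2 ⟨by positivity, by gcongr⟩

lemma card_add_nsmul_pair {X : Finset ℤ} {s : ℤ} (hX : ∀ x ∈ X, 0 ≤ x ∧ x < s) (h : ℕ) :
    #(X + h • {0, s}) = #X * (h + 1) := by
  rcases X.eq_empty_or_nonempty with rfl | ⟨x₀, hx₀⟩
  · simp
  have hs : 0 < s := by linarith [hX x₀ hx₀]
  have hinj : Function.Injective fun i : ℕ ↦ (i : ℤ) * s := fun i j hij ↦ by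
    simpa [hs.ne'] using hij
  rw [card_add_iff.2, nsmul_pair_eq_image, card_image_of_injective _ hinj, card_range]
  rintro ⟨x, _⟩ hx ⟨y, _⟩ hy hxy
  simp only [Set.mem_prod, mem_coe, nsmul_pair_eq_image, mem_image] at hx hy hxy
  obtain ⟨hxX, i, -, rfl⟩ := hx
  obtain ⟨hyX, j, -, rfl⟩ := hy
  -- reducing modulo `s` recovers the `X`-component
  have hxy' : x = y := by
    have := congrArg (· % s) hxy
    simp only [Int.add_mul_emod_self_right] at this
    rwa [Int.emod_eq_of_lt (hX x hxX).1 (hX x hxX).2,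
      Int.emod_eq_of_lt (hX y hyX).1 (hX y hyX).2] at this
  subst hxy'
  simp only [add_right_inj] at hxy
  rw [hinj hxy]

noncomputable def gapSet (w : ℕ → ℕ) : ℕ → Finset ℤ
  | 0 => Icc 0 (w 0 : ℤ)
  | t + 1 => gapSet w t + {0, (w (t + 1) : ℤ) - w t}

lemma gapSet_nonempty (w : ℕ → ℕ) (t : ℕ) : (gapSet w t).Nonempty := by
  induction t with
  | zero => exact nonempty_Icc.2 (by positivity)
  | succ t ih => exact ih.add (insert_nonempty _ _)

section GapSet

variable {w : ℕ → ℕ}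

lemma monotone_of_add_two_mul_lt (hlow : ∀ t, (t + 2) * w t < w (t + 1)) : Monotone w :=
  monotone_nat_of_le_succ fun t ↦ (Nat.le_mul_of_pos_left _ (by omega)).trans (hlow t).le

lemma nsmul_gapSet_subset (hw : Monotone w) (h t : ℕ) :
    h • gapSet w t ⊆ Icc 0 ((h : ℤ) * w t) := by
  induction t with
  | zero => exact (nsmul_Icc_zero h (w 0)).subset
  | succ t ih =>
    have hgap : (0 : ℤ) ≤ w (t + 1) - w t := sub_nonneg.2 (by exact_mod_cast hw t.le_succ)
    calc h • gapSet w (t + 1)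
        = h • gapSet w t + h • {0, (w (t + 1) : ℤ) - w t} := nsmul_add ..
      _ ⊆ Icc 0 ((h : ℤ) * w t) + Icc 0 (h * ((w (t + 1) : ℤ) - w t)) :=
          add_subset_add ih (nsmul_pair_subset_Icc hgap h)
      _ ⊆ Icc 0 ((h : ℤ) * w (t + 1)) := (Icc_add_Icc_subset ..).trans_eq <| by
          rw [zero_add, ← mul_add, add_sub_cancel]

lemma nsmul_gapSet_eq_Icc (hw : Monotone w) (hup : ∀ t, w (t + 1) ≤ (t + 3) * w t)
    {h t : ℕ} (ht : t < h) : h • gapSet w t = Icc 0 ((h : ℤ) * w t) := by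
  induction t with
  | zero => exact nsmul_Icc_zero h (w 0)
  | succ t ih =>
    have hgap : (0 : ℤ) ≤ w (t + 1) - w t := sub_nonneg.2 (by exact_mod_cast hw t.le_succ)
    have hgap' : (w (t + 1) : ℤ) - w t ≤ h * w t + 1 := by
      have : (w (t + 1) : ℤ) ≤ (t + 3) * w t := by exact_mod_cast hup t
      have : ((t : ℤ) + 2) * w t ≤ h * w t := by gcongr; exact_mod_cast ht
      linarith
    rw [gapSet, nsmul_add, ih (by omega), Icc_zero_add_nsmul_pair hgap hgap', ← mul_add,
      add_sub_cancel]

lemma card_nsmul_gapSet_succ (hlow : ∀ t, (t + 2) * w t < w (t + 1)) {h t : ℕ}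
    (ht : h ≤ t + 1) : #(h • gapSet w (t + 1)) = #(h • gapSet w t) * (h + 1) := by
  have hw := monotone_of_add_two_mul_lt hlow
  rw [gapSet, nsmul_add]
  refine card_add_nsmul_pair (fun x hx ↦ ?_) h
  have hx := mem_Icc.1 (nsmul_gapSet_subset hw h t hx)
  have : ((t : ℤ) + 2) * w t < w (t + 1) := by exact_mod_cast hlow t
  have : (h : ℤ) * w t ≤ (t + 1) * w t := by gcongr; exact_mod_cast ht
  constructor <;> linarith

lemma card_nsmul_gapSet_of_lt (hlow : ∀ t, (t + 2) * w t < w (t + 1))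
    (hup : ∀ t, w (t + 1) ≤ (t + 3) * w t) {h t : ℕ} (ht : t < h) :
    #(h • gapSet w t) = h * w t + 1 := by
  rw [nsmul_gapSet_eq_Icc (monotone_of_add_two_mul_lt hlow) hup ht, Int.card_Icc, sub_zero]
  exact_mod_cast Int.toNat_natCast _

lemma card_nsmul_gapSet_of_le (hlow : ∀ t, (t + 2) * w t < w (t + 1))
    (hup : ∀ t, w (t + 1) ≤ (t + 3) * w t) {h t : ℕ} (hh : 0 < h) (ht : h ≤ t + 1) :
    #(h • gapSet w t) = (h * w (h - 1) + 1) * (h + 1) ^ (t + 1 - h) := by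
  induction t, (by omega : h - 1 ≤ t) using Nat.le_induction with
  | base => rw [card_nsmul_gapSet_of_lt hlow hup (by omega), Nat.sub_add_cancel hh]; simp
  | succ t ht' ih =>
    rw [card_nsmul_gapSet_succ hlow (by omega), ih (by omega),
      show t + 1 + 1 - h = t + 1 - h + 1 by omega, pow_succ, mul_assoc]

end GapSet

section Rank

variable {ι α : Type*} [Fintype ι] [LinearOrder α]

def orderRank (f : ι → α) (j : ι) : ℕ := #{i | f i < f j}

lemma orderRank_lt_card (f : ι → α) (j : ι) : orderRank f j < Fintype.card ι :=
  card_lt_univ_of_notMem (x := j) (by simp)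

lemma orderRank_le_orderRank_iff {f : ι → α} {j k : ι} :
    orderRank f j ≤ orderRank f k ↔ f j ≤ f k := by
  constructor
  · contrapose!
    intro hkj
    refine card_lt_card ⟨fun i hi ↦ ?_, fun hsub ↦ ?_⟩
    · simp only [mem_filter, mem_univ, true_and] at hi ⊢
      exact hi.trans hkj
    · simpa using hsub (mem_filter.2 ⟨mem_univ k, hkj⟩)
  · intro hjk
    refine card_le_card fun i hi ↦ ?_
    simp only [mem_filter, mem_univ, true_and] at hi ⊢
    exact hi.trans_le hjk

/- With `N = card ι` and ranks in `[0, N)`: the term `2 N (t + 2)!` dominates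
`(t + 2) (N + rank)`, and the offset `N` absorbs a change of rank, so consecutive weights have
ratio in `(t + 2, t + 3]`. -/
def rankWeight (σ : ℕ → ι → α) (j : ι) (t : ℕ) : ℕ :=
  2 * Fintype.card ι * (t + 2)! + Fintype.card ι + orderRank (σ t) j

variable (σ : ℕ → ι → α) (j : ι)

lemma add_two_mul_rankWeight_lt (t : ℕ) :
    (t + 2) * rankWeight σ j t < rankWeight σ j (t + 1) := by
  have hr := orderRank_lt_card (σ t) j
  have hF := Nat.mul_le_mul_left (2 * Fintype.card ι) (Nat.self_le_factorial (t + 2))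
  rw [rankWeight, rankWeight, show t + 1 + 2 = t + 2 + 1 from rfl, Nat.factorial_succ (t + 2)]
  nlinarith

lemma rankWeight_succ_le (t : ℕ) : rankWeight σ j (t + 1) ≤ (t + 3) * rankWeight σ j t := by
  have hr := orderRank_lt_card (σ (t + 1)) j
  rw [rankWeight, rankWeight, show t + 1 + 2 = t + 2 + 1 from rfl, Nat.factorial_succ (t + 2)]
  nlinarith

lemma rankWeight_le_rankWeight_iff {k : ι} {t : ℕ} :
    rankWeight σ j t ≤ rankWeight σ k t ↔ σ t j ≤ σ t k := by
  rw [rankWeight, rankWeight, add_le_add_iff_left, orderRank_le_orderRank_iff]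

end Rank

theorem exists_card_nsmul_le_iff {ι α : Type*} [Fintype ι] [LinearOrder α]
    (σ : ℕ → ι → α) (T : ℕ) :
    ∃ A : ι → Finset ℤ, (∀ i, (A i).Nonempty) ∧ ∀ h, 0 < h → ∀ j k,
      #(h • A j) ≤ #(h • A k) ↔ σ (min T (h - 1)) j ≤ σ (min T (h - 1)) k := by
  refine ⟨fun j ↦ gapSet (rankWeight σ j) T, fun j ↦ gapSet_nonempty _ T, fun h hh j k ↦ ?_⟩
  rcases lt_or_ge T h with hT | hT
  · rw [card_nsmul_gapSet_of_lt (add_two_mul_rankWeight_lt σ j) (rankWeight_succ_le σ j) hT,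
      card_nsmul_gapSet_of_lt (add_two_mul_rankWeight_lt σ k) (rankWeight_succ_le σ k) hT,
      min_eq_left (by omega), add_le_add_iff_right, Nat.mul_le_mul_left_iff hh,
      rankWeight_le_rankWeight_iff]
  · rw [card_nsmul_gapSet_of_le (add_two_mul_rankWeight_lt σ j) (rankWeight_succ_le σ j) hh
        (by omega),
      card_nsmul_gapSet_of_le (add_two_mul_rankWeight_lt σ k) (rankWeight_succ_le σ k) hh
        (by omega),
      min_eq_right (by omega), Nat.mul_le_mul_right_iff (by positivity), add_le_add_iff_right,
      Nat.mul_le_mul_left_iff hh, rankWeight_le_rankWeight_iff]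

/-- **Theorem 2.** For all `n, H ≥ 1` and tuples `τ_1, …, τ_H, τ_∞ ∈ ℕ^n`, there exist
finite nonempty subsets `A_1, …, A_n ⊆ ℤ` such that for each `1 ≤ h ≤ H` the quantities
`|hA_1|, …, |hA_n|` have the same relative order (including equalities) as `τ_h`, and for
every `h > H` they have the same relative order as `τ_∞`. -/
theorem extension_theorem (n H : ℕ)
    (τ : Fin H → (Fin n → ℕ)) (τinf : Fin n → ℕ) :
    ∃ A : Fin n → Finset ℤ,
      (∀ k, (A k).Nonempty) ∧
      (∀ h : ℕ, ∀ h1 : 1 ≤ h, ∀ hhH : h ≤ H, ∀ j k : Fin n,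
        (h • A j).card ≤ (h • A k).card ↔
          τ ⟨h - 1, by omega⟩ j ≤ τ ⟨h - 1, by omega⟩ k) ∧
      (∀ h : ℕ, H < h → ∀ j k : Fin n,
        (h • A j).card ≤ (h • A k).card ↔ τinf j ≤ τinf k) := by
  obtain ⟨A, hA, hcard⟩ :=
    exists_card_nsmul_le_iff (fun t ↦ if ht : t < H then τ ⟨t, ht⟩ else τinf) H
  refine ⟨A, hA, fun h h1 hhH j k ↦ ?_, fun h hHh j k ↦ ?_⟩
  · rw [hcard h h1, min_eq_right (by omega), dif_pos (by omega)]
  · rw [hcard h (by omega), min_eq_left (by omega), dif_neg (lt_irrefl H)]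
end

section
/- Let 1 ≤ u ≤ v be integers and let j ≥ 1 be a natural number with (j + 1)u ≥ v − 1 (equivalently, j ≥ (v − 1)/u − 1). Then the j-fold sumset satisfies jY(u, v) = [0, jv]. -/
/-!
Writing `w = v − u`, a sum of `k` elements of `[v − u, v]` and `j − k` elements of `[0, u]` fills
the interval `[k w, k w + j u]`. As `k` runs over `0, …, j` these intervals start at `0`, end at
`j v`, and consecutive ones leave no gap exactly when `w ≤ j u + 1`, i.e. `v − 1 ≤ (j + 1) u`.
-/

open Pointwise

/-- `Y u v = [0, u] ∪ [v − u, v] ⊆ ℤ`. -/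
noncomputable def Y (u v : ℤ) : Finset ℤ := Finset.Icc 0 u ∪ Finset.Icc (v - u) v

namespace Finset

variable {α : Type*} [AddCommMonoid α] [LinearOrder α] [IsOrderedAddMonoid α]
  [AddLeftReflectLE α] [ExistsAddOfLE α] [LocallyFiniteOrder α] [DecidableEq α]

theorem Icc_add_Icc {a b c d : α} (hab : a ≤ b) (hcd : c ≤ d) :
    Icc a b + Icc c d = Icc (a + c) (b + d) := by
  rw [← coe_inj, coe_add, coe_Icc, coe_Icc, coe_Icc, Set.Icc_add_Icc hab hcd]

theorem nsmul_Icc (n : ℕ) {a b : α} (hab : a ≤ b) : n • Icc a b = Icc (n • a) (n • b) := by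
  induction n with
  | zero => simp [← singleton_zero]
  | succ n ih =>
    rw [succ_nsmul, ih, Icc_add_Icc (nsmul_le_nsmul_right hab n) hab, succ_nsmul, succ_nsmul]

end Finset

open Finset

theorem exists_nat_mul_le_le_mul_add {w d n : ℤ} (hw : w ≤ d + 1) (hn : 0 ≤ n) (j : ℕ)
    (hnj : n ≤ j * w + d) : ∃ k ≤ j, k * w ≤ n ∧ n ≤ k * w + d := by
  induction j with
  | zero => exact ⟨0, le_rfl, by simpa using hn, by simpa using hnj⟩
  | succ j ih =>
    by_cases hn' : n ≤ j * w + d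
    · obtain ⟨k, hkj, hk⟩ := ih hn'
      exact ⟨k, hkj.trans j.le_succ, hk⟩
    · refine ⟨j + 1, le_rfl, ?_, hnj⟩
      push_cast at hnj ⊢
      linarith

theorem Y_subset_Icc {u v : ℤ} (huv : u ≤ v) : Y u v ⊆ Icc 0 v := by
  intro x hx
  simp only [Y, mem_union, mem_Icc] at hx ⊢
  omega

theorem nsmul_Y_subset_Icc {u v : ℤ} (hu : 0 ≤ u) (huv : u ≤ v) (j : ℕ) :
    j • Y u v ⊆ Icc 0 (j * v) :=
  calc j • Y u v ⊆ j • Icc 0 v := nsmul_subset_nsmul_left (Y_subset_Icc huv)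
    _ = Icc 0 (j * v) := by rw [nsmul_Icc j (hu.trans huv), nsmul_zero, nsmul_eq_mul]

theorem Icc_subset_nsmul_Y {u v : ℤ} (hu : 0 ≤ u) {k j : ℕ} (hkj : k ≤ j) :
    Icc (k * (v - u)) (k * (v - u) + j * u) ⊆ j • Y u v :=
  calc Icc (k * (v - u)) (k * (v - u) + j * u)
      = k • Icc (v - u) v + (j - k) • Icc 0 u := by
        rw [nsmul_Icc k (by omega), nsmul_Icc (j - k) hu,
          Icc_add_Icc (by gcongr; omega) (by positivity)]
        simp only [nsmul_eq_mul, Nat.cast_sub hkj]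
        ring_nf
    _ ⊆ k • Y u v + (j - k) • Y u v :=
      add_subset_add (nsmul_subset_nsmul_left subset_union_right)
        (nsmul_subset_nsmul_left subset_union_left)
    _ = j • Y u v := by rw [← add_nsmul, Nat.add_sub_cancel' hkj]

theorem jfold_sumset_Y_full_general (u v : ℤ) (hu : 1 ≤ u) (huv : u ≤ v)
    (j : ℕ) (hjv : v - 1 ≤ ((j : ℤ) + 1) * u) :
    j • Y u v = Finset.Icc 0 ((j : ℤ) * v) := by
  refine (nsmul_Y_subset_Icc (zero_le_one.trans hu) huv j).antisymm fun n hn ↦ ?_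
  rw [mem_Icc] at hn
  obtain ⟨k, hkj, hk⟩ := exists_nat_mul_le_le_mul_add (w := v - u) (d := j * u)
    (by linarith) hn.1 j (by linarith)
  exact Icc_subset_nsmul_Y (zero_le_one.trans hu) hkj (mem_Icc.2 hk)

/-- For integers `1 ≤ u ≤ v` and `j ≥ 1` with `(j+1)u ≥ v − 1`, the `j`-fold sumset
satisfies `jY(u,v) = [0, jv]`. -/
theorem jfold_sumset_Y_full (u v : ℤ) (hu : 1 ≤ u) (huv : u ≤ v)
    (j : ℕ) (hj : 1 ≤ j) (hjv : v - 1 ≤ ((j : ℤ) + 1) * u) :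
    j • Y u v = Finset.Icc 0 ((j : ℤ) * v) :=
  jfold_sumset_Y_full_general u v hu huv j hjv
end
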